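/- arXiv:1808.07124 — 3 statements merged into one kernel-verified Lean document; each statement's English description precedes it below -/
import Mathlib

section
/- If the block quotient of a linear order is densely ordered, then every infinite open interval can be split into two infinite parts: for a < b with (a,b) infinite, there exists c with a < c < b such that both (a,c) and (c,b) are infinite. -/
lemma ioo_infinite_of_icc {L : Type*} [LinearOrder L] {a b : L}
    (h : (Set.Icc a b).Infinite) : (Set.Ioo a b).Infinite := by
  have hsub : Set.Icc a b ⊆ insert a (insert b (Set.Ioo a b)) := by
    intro x hx
    rcases eq_or_lt_of_le hx.1 with rfl | h1
    · exact Set.mem_insert _ _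
    rcases eq_or_lt_of_le hx.2 with rfl | h2
    · exact Set.mem_insert_of_mem _ (Set.mem_insert _ _)
    exact Set.mem_insert_of_mem _ (Set.mem_insert_of_mem _ ⟨h1, h2⟩)
  intro hfin
  exact h (((hfin.insert b).insert a).subset hsub)


/-- If the block quotient of a linear order is densely ordered (between any two distinct
blocks there is a third), then every infinite open interval splits into two infinite parts. -/
theorem infinite_interval_splits (L : Type*) [LinearOrder L]
    (blk : L → L → Prop)
    (hblk : ∀ a b, blk a b ↔ (Set.Icc (min a b) (max a b)).Finite)
    (hdense : ∀ a b : L, a < b → ¬ blk a b →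
      ∃ c, a < c ∧ c < b ∧ ¬ blk a c ∧ ¬ blk c b) :
    ∀ a b : L, a < b → (Set.Ioo a b).Infinite →
      ∃ c, a < c ∧ c < b ∧ (Set.Ioo a c).Infinite ∧ (Set.Ioo c b).Infinite := by
  intro a b hab hinf
  have hnb : ¬ blk a b := by
    intro h
    rw [hblk, min_eq_left hab.le, max_eq_right hab.le] at h
    exact hinf (h.subset Set.Ioo_subset_Icc_self)
  obtain ⟨c, hac, hcb, h1, h2⟩ := hdense a b hab hnb
  rw [hblk, min_eq_left hac.le, max_eq_right hac.le] at h1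
  rw [hblk, min_eq_left hcb.le, max_eq_right hcb.le] at h2
  exact ⟨c, hac, hcb, ioo_infinite_of_icc ((Set.not_infinite.not_right.mp h1)),
    ioo_infinite_of_icc ((Set.not_infinite.not_right.mp h2))⟩
end

section
/- In the lexicographic product A ×ₗ Θ, where Θ = ℚ ⊕ (Fin 2) ⊕ ℚ with its natural linear order (order type η + 2 + η) and A is any linear order, every equivalence class of the block relation has at most 2 elements. -/
open Sum Set

/-!
A finite interval `[a, c]` with `a < c` contains a cover `a ⋖ b ≤ c`, and then `[b, c]` is
finite too. So in a linear order in which no two covers are consecutive, a finite interval with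
distinct endpoints is itself a cover, and the block of `x` consists of `x` and at most one element
covering it or covered by it. In `Θ` the only cover is the pair of points of `Fin 2`, and since
`Θ` has no maximum, every cover of `A ×ₗ Θ` lies inside a single copy of `Θ`.
-/

def NoConsecutiveCovBy (α : Type*) [LT α] : Prop :=
  ∀ ⦃a b c : α⦄, a ⋖ b → ¬b ⋖ c

theorem noConsecutiveCovBy_of_denselyOrdered (α : Type*) [Preorder α] [DenselyOrdered α] :
    NoConsecutiveCovBy α :=
  fun _ _ _ hab _ => not_covBy hab

theorem noConsecutiveCovBy_fin_two : NoConsecutiveCovBy (Fin 2) := by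
  intro a b c hab hbc
  have := hab.lt
  have := hbc.lt
  omega

namespace Sum.Lex
variable {α β : Type*} [LinearOrder α] [LinearOrder β]

theorem covBy_of_inl_covBy_inl {a b : α} (h : inlₗ a ⋖ (inlₗ b : α ⊕ₗ β)) : a ⋖ b :=
  h.of_image (OrderEmbedding.ofStrictMono _ inl_strictMono)

theorem covBy_of_inr_covBy_inr {a b : β} (h : inrₗ a ⋖ (inrₗ b : α ⊕ₗ β)) : a ⋖ b :=
  h.of_image (OrderEmbedding.ofStrictMono _ inr_strictMono)

theorem isMax_and_isMin_of_inl_covBy_inr {a : α} {b : β} (h : inlₗ a ⋖ inrₗ b) :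
    IsMax a ∧ IsMin b :=
  ⟨fun c _ => not_lt.1 fun hac => h.2 (c := inlₗ c) (inl_lt_inl_iff.2 hac) (inl_lt_inr _ _),
    fun c _ => not_lt.1 fun hcb => h.2 (c := inrₗ c) (inl_lt_inr _ _) (inr_lt_inr_iff.2 hcb)⟩

end Sum.Lex

theorem NoConsecutiveCovBy.sumLex {α β : Type*} [LinearOrder α] [LinearOrder β]
    (hα : NoConsecutiveCovBy α) (hβ : NoConsecutiveCovBy β)
    (hαβ : ∀ (a : α) (b : β), IsMax a → ¬IsMin b) : NoConsecutiveCovBy (α ⊕ₗ β) := by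
  intro x y z hxy hyz
  rcases y with b | b
  · rcases x with a | a
    · rcases z with c | c
      · exact hα (Sum.Lex.covBy_of_inl_covBy_inl hxy) (Sum.Lex.covBy_of_inl_covBy_inl hyz)
      · obtain ⟨hb, hc⟩ := Sum.Lex.isMax_and_isMin_of_inl_covBy_inr hyz
        exact hαβ b c hb hc
    · exact Sum.Lex.not_inr_lt_inl hxy.lt
  · rcases z with c | c
    · exact Sum.Lex.not_inr_lt_inl hyz.lt
    · rcases x with a | a
      · obtain ⟨ha, hb⟩ := Sum.Lex.isMax_and_isMin_of_inl_covBy_inr hxy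
        exact hαβ a b ha hb
      · exact hβ (Sum.Lex.covBy_of_inr_covBy_inr hxy) (Sum.Lex.covBy_of_inr_covBy_inr hyz)

theorem NoConsecutiveCovBy.prodLex {α β : Type*} [Preorder α] [Preorder β] [NoMaxOrder β]
    (hβ : NoConsecutiveCovBy β) : NoConsecutiveCovBy (α ×ₗ β) := by
  have snd_covBy : ∀ {x y : α ×ₗ β}, x ⋖ y → (ofLex x).2 ⋖ (ofLex y).2 :=
    fun h => ((Prod.Lex.covBy_iff.1 h).resolve_right fun h' => not_isMax _ h'.2.1).2
  exact fun x y z hxy hyz => hβ (snd_covBy hxy) (snd_covBy hyz)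

theorem exists_covBy_le_of_finite_Icc {α : Type*} [PartialOrder α] {a c : α} (hac : a < c)
    (h : (Icc a c).Finite) : ∃ b, a ⋖ b ∧ b ≤ c := by
  obtain ⟨b, hb⟩ := (h.subset Ioc_subset_Icc_self).exists_minimal ⟨c, hac, le_rfl⟩
  refine ⟨b, ⟨hb.prop.1, fun d had hdb => ?_⟩, hb.prop.2⟩
  exact hdb.not_ge (hb.le_of_le ⟨had, hdb.le.trans hb.prop.2⟩ hdb.le)

namespace NoConsecutiveCovBy
variable {α : Type*} [LinearOrder α]

theorem covBy_of_finite_Icc (h : NoConsecutiveCovBy α) {a c : α} (hac : a < c)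
    (hfin : (Icc a c).Finite) : a ⋖ c := by
  obtain ⟨b, hab, hbc⟩ := exists_covBy_le_of_finite_Icc hac hfin
  rcases hbc.eq_or_lt with rfl | hbc
  · exact hab
  · obtain ⟨d, hbd, -⟩ := exists_covBy_le_of_finite_Icc hbc
      (hfin.subset (Icc_subset_Icc_left hab.le))
    exact (h hab hbd).elim

theorem eq_or_covBy_or_covBy_of_finite_uIcc (h : NoConsecutiveCovBy α) {x y : α}
    (hfin : (uIcc x y).Finite) : y = x ∨ x ⋖ y ∨ y ⋖ x := by
  rcases lt_trichotomy x y with hxy | rfl | hyx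
  · exact Or.inr (Or.inl (h.covBy_of_finite_Icc hxy (uIcc_of_lt hxy ▸ hfin)))
  · exact Or.inl rfl
  · exact Or.inr (Or.inr (h.covBy_of_finite_Icc hyx (uIcc_of_gt hyx ▸ hfin)))

theorem exists_finset_card_le_two (h : NoConsecutiveCovBy α) (x : α) :
    ∃ s : Finset α, {y | (uIcc x y).Finite} ⊆ ↑s ∧ s.card ≤ 2 := by
  classical
  by_cases hnb : ∃ y, x ⋖ y ∨ y ⋖ x
  · obtain ⟨y, hy⟩ := hnb
    refine ⟨{x, y}, fun z hz => ?_, Finset.card_le_two⟩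
    simp only [Finset.coe_insert, Finset.coe_singleton, mem_insert_iff, mem_singleton_iff]
    rcases h.eq_or_covBy_or_covBy_of_finite_uIcc hz with rfl | hz | hz
    · exact Or.inl rfl
    · exact Or.inr (hy.elim (hz.unique_right ·) fun hyx => (h hyx hz).elim)
    · exact Or.inr (hy.elim (fun hxy => (h hz hxy).elim) (hz.unique_left ·))
  · refine ⟨{x}, fun z hz => ?_, by simp⟩
    rcases h.eq_or_covBy_or_covBy_of_finite_uIcc hz with rfl | hz | hz
    · exact Finset.mem_coe.2 (Finset.mem_singleton_self _)
    · exact (hnb ⟨z, .inl hz⟩).elim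
    · exact (hnb ⟨z, .inr hz⟩).elim

end NoConsecutiveCovBy

/-- In the lexicographic product `A ×ₗ Θ`, where `Θ = ℚ ⊕ₗ (Fin 2 ⊕ₗ ℚ)` has order type
`η + 2 + η`, every block (equivalence class of the block relation) has at most 2 elements. -/
theorem theta_times_A_blocks_le_two (A : Type*) [LinearOrder A] :
    ∀ x : Lex (A × (ℚ ⊕ₗ (Fin 2 ⊕ₗ ℚ))),
      ∃ s : Finset (Lex (A × (ℚ ⊕ₗ (Fin 2 ⊕ₗ ℚ)))),
        {y | (Set.Icc (min x y) (max x y)).Finite} ⊆ ↑s ∧ s.card ≤ 2 := by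
  have hΘ : NoConsecutiveCovBy (ℚ ⊕ₗ (Fin 2 ⊕ₗ ℚ)) :=
    (noConsecutiveCovBy_of_denselyOrdered ℚ).sumLex
      (noConsecutiveCovBy_fin_two.sumLex (noConsecutiveCovBy_of_denselyOrdered ℚ)
        fun _ b _ => not_isMin b)
      fun a _ ha => (not_isMax a ha).elim
  exact (hΘ.prodLex (α := A)).exists_finset_card_le_two
end

section
/- Two countable equivalence structures, each having infinitely many infinite equivalence classes, are isomorphic if and only if for every finite n they have the same number of equivalence classes of size n. -/
/-!
An isomorphism of equivalence structures is a bijection between the quotients that preserves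
the cardinality of each class, glued together with bijections between matched classes; such a
bijection of quotients exists iff for every cardinal `κ` both sides have equally many classes of
cardinality `κ`. On `ℕ` every class has cardinality some `n ≥ 1` or `ℵ₀`, and the hypotheses
provide `ℵ₀` classes of cardinality `ℵ₀` on both sides.
-/

open Cardinal

lemma Set.finite_and_ncard_eq_iff_mk_eq {α : Type*} (S : Set α) (n : ℕ) :
    S.Finite ∧ S.ncard = n ↔ #S = n := by
  constructor
  · rintro ⟨hfin, rfl⟩
    have := hfin.to_subtype
    rw [← Nat.card_coe_set_eq, Nat.cast_card]
  · intro h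
    have hfin : S.Finite := lt_aleph0_iff_set_finite.mp (h ▸ natCast_lt_aleph0)
    have := hfin.to_subtype
    refine ⟨hfin, ?_⟩
    rw [← Nat.card_coe_set_eq, ← Nat.cast_inj (R := Cardinal), Nat.cast_card, h]

lemma Set.infinite_iff_mk_eq_aleph0 {α : Type*} [Countable α] (S : Set α) :
    S.Infinite ↔ #S = ℵ₀ := by
  rw [← Set.infinite_coe_iff, infinite_iff]
  exact ⟨fun h => le_antisymm mk_le_aleph0 h, ge_of_eq⟩

namespace Setoid

universe u

variable {α β : Type u} (s : Setoid α) (t : Setoid β)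

def classCard (q : Quotient s) : Cardinal.{u} := #{a // Quotient.mk s a = q}

def classCount (κ : Cardinal.{u}) : Cardinal.{u} := #{q : Quotient s | s.classCard q = κ}

lemma preimage_mk_singleton_mk (a : α) : Quotient.mk s ⁻¹' {Quotient.mk s a} = {b | s a b} := by
  ext b
  exact Quotient.eq.trans s.comm

lemma classCard_ne_zero (q : Quotient s) : s.classCard q ≠ 0 := by
  induction q using Quotient.ind with
  | _ a => exact mk_ne_zero_iff.mpr ⟨⟨a, rfl⟩⟩

lemma classCard_le_aleph0 [Countable α] (q : Quotient s) : s.classCard q ≤ ℵ₀ :=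
  mk_le_aleph0

lemma classCount_eq_zero {κ : Cardinal.{u}} (h : ∀ q, s.classCard q ≠ κ) : s.classCount κ = 0 :=
  mk_eq_zero_iff.mpr ⟨fun q => h q.1 q.2⟩

lemma classCount_eq_mk_classes (κ : Cardinal.{u}) :
    s.classCount κ = #{S : Set α | (∃ a, S = {b | s a b}) ∧ #S = κ} := by
  have hinj : Function.Injective fun q : Quotient s => Quotient.mk s ⁻¹' {q} :=
    (Set.preimage_injective.mpr Quotient.mk_surjective).comp Set.singleton_injective
  rw [classCount, ← mk_image_eq hinj]
  congr! 2
  ext S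
  constructor
  · rintro ⟨q, hq, rfl⟩
    induction q using Quotient.ind with
    | _ a => exact ⟨⟨a, s.preimage_mk_singleton_mk a⟩, hq⟩
  · rintro ⟨⟨a, rfl⟩, hS⟩
    refine ⟨Quotient.mk s a, ?_, s.preimage_mk_singleton_mk a⟩
    rwa [← s.preimage_mk_singleton_mk a] at hS

lemma classCard_congr (f : α ≃ β) (hf : ∀ a b, s a b ↔ t (f a) (f b)) (q : Quotient s) :
    t.classCard (Quotient.congr f hf q) = s.classCard q := by
  refine (mk_congr (f.subtypeEquiv fun a => ?_)).symm
  rw [← Quotient.congr_mk f hf, (Quotient.congr f hf).apply_eq_iff_eq]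

lemma exists_equiv_mk_eq_of_classCard_eq (Φ : Quotient s ≃ Quotient t)
    (hΦ : ∀ q, t.classCard (Φ q) = s.classCard q) :
    ∃ f : α ≃ β, ∀ a, Quotient.mk t (f a) = Φ (Quotient.mk s a) := by
  have hfiber (c : Quotient t) : #{a // Φ (Quotient.mk s a) = c} = #{b // Quotient.mk t b = c} :=
    calc #{a // Φ (Quotient.mk s a) = c}
        _ = s.classCard (Φ.symm c) :=
          mk_congr (Equiv.subtypeEquivRight fun a => Φ.eq_symm_apply.symm)
        _ = t.classCard c := by rw [← hΦ, Φ.apply_symm_apply]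
  let e (c : Quotient t) := Classical.choice (Cardinal.eq.mp (hfiber c))
  exact ⟨Equiv.ofFiberEquiv e, Equiv.ofFiberEquiv_map e⟩

theorem exists_equiv_rel_iff_iff_classCount_eq :
    (∃ f : α ≃ β, ∀ a b, s a b ↔ t (f a) (f b)) ↔ ∀ κ, s.classCount κ = t.classCount κ := by
  constructor
  · rintro ⟨f, hf⟩ κ
    refine mk_congr ((Quotient.congr f hf).subtypeEquiv fun q => ?_)
    simp only [Set.mem_ofPred_eq, classCard_congr]
  · intro h
    let Φ := Equiv.ofFiberEquiv fun κ => Classical.choice (Cardinal.eq.mp (h κ))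
    obtain ⟨f, hf⟩ := exists_equiv_mk_eq_of_classCard_eq s t Φ (Equiv.ofFiberEquiv_map _)
    refine ⟨f, fun a b => ?_⟩
    rw [← Quotient.eq, ← Quotient.eq, hf, hf, Φ.apply_eq_iff_eq]

lemma classCount_natCast_eq_mk_classes (n : ℕ) :
    s.classCount n = #{S : Set α | (∃ a, S = {b | s a b}) ∧ S.Finite ∧ S.ncard = n} := by
  simp only [Set.finite_and_ncard_eq_iff_mk_eq]
  exact s.classCount_eq_mk_classes n

lemma classCount_aleph0_eq_aleph0 [Countable α]
    (h : {S : Set α | (∃ a, S = {b | s a b}) ∧ S.Infinite}.Infinite) :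
    s.classCount ℵ₀ = ℵ₀ := by
  refine le_antisymm mk_le_aleph0 ?_
  rw [classCount_eq_mk_classes, ← infinite_iff]
  simp only [← Set.infinite_iff_mk_eq_aleph0]
  exact h.to_subtype

lemma classCount_eq_of_countable [Countable α] [Countable β]
    (h_aleph0 : s.classCount ℵ₀ = t.classCount ℵ₀)
    (h_nat : ∀ n : ℕ, 1 ≤ n → s.classCount n = t.classCount n) (κ : Cardinal.{u}) :
    s.classCount κ = t.classCount κ := by
  rcases lt_trichotomy κ ℵ₀ with hκ | rfl | hκ
  · obtain ⟨n, rfl⟩ := lt_aleph0.mp hκ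
    rcases Nat.eq_zero_or_pos n with rfl | hn
    · rw [Nat.cast_zero, classCount_eq_zero _ s.classCard_ne_zero,
        classCount_eq_zero _ t.classCard_ne_zero]
    · exact h_nat n hn
  · exact h_aleph0
  · rw [classCount_eq_zero _ fun q => (s.classCard_le_aleph0 q).trans_lt hκ |>.ne,
      classCount_eq_zero _ fun q => (t.classCard_le_aleph0 q).trans_lt hκ |>.ne]

end Setoid

/-- Two countable equivalence structures, each with infinitely many infinite classes, are
isomorphic iff for each finite `n ≥ 1` they have the same number (as a cardinal) of
classes of size exactly `n`. -/
theorem equivalence_structures_iso_iff (E E' : ℕ → ℕ → Prop)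
    (hE : Equivalence E) (hE' : Equivalence E')
    (hInfE : {s : Set ℕ | (∃ a, s = {b | E a b}) ∧ s.Infinite}.Infinite)
    (hInfE' : {s : Set ℕ | (∃ a, s = {b | E' a b}) ∧ s.Infinite}.Infinite) :
    (∃ f : ℕ ≃ ℕ, ∀ a b, E a b ↔ E' (f a) (f b)) ↔
    (∀ n : ℕ, 1 ≤ n →
      Cardinal.mk {s : Set ℕ | (∃ a, s = {b | E a b}) ∧ s.Finite ∧ s.ncard = n} =
      Cardinal.mk {s : Set ℕ | (∃ a, s = {b | E' a b}) ∧ s.Finite ∧ s.ncard = n}) := by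
  let s : Setoid ℕ := ⟨E, hE⟩
  let t : Setoid ℕ := ⟨E', hE'⟩
  have h_aleph0 : s.classCount ℵ₀ = t.classCount ℵ₀ := by
    rw [s.classCount_aleph0_eq_aleph0 hInfE, t.classCount_aleph0_eq_aleph0 hInfE']
  refine (s.exists_equiv_rel_iff_iff_classCount_eq t).trans
    ⟨fun h n _ => ?_, fun h => s.classCount_eq_of_countable t h_aleph0 fun n hn => ?_⟩
  -- The sets in the statement match those of `s` and `t` only after unfolding `Setoid.r`,
  -- so they are connected by `trans` rather than `rw`.
  · exact (s.classCount_natCast_eq_mk_classes n).symm.trans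
      ((h n).trans (t.classCount_natCast_eq_mk_classes n))
  · exact (s.classCount_natCast_eq_mk_classes n).trans
      ((h n hn).trans (t.classCount_natCast_eq_mk_classes n).symm)
end
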